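/- For any odd positive integers w1, w2, w3, any complex numbers y1, y2, and any nonnegative integer n: Σ_{k+l+m=n} (n choose k,l,m) E_{k,χ}(w1 y1) E_{l,χ}(w2 y2) T_m(w3 d − 1, χ) w1^{l+m} w2^{k+m} w3^{k+l} = w3^n Σ_{k=0}^{n} (n choose k) E_{k,χ}(w1 y1) Σ_{a=0}^{w3 d − 1} (−1)^a χ(a) E_{n−k,χ}(w2 y2 + (w2/w3) a) w1^{n−k} w2^{k}. -/

import Mathlib

open Finset

/-- The formal exponential power series `e^{ct} = Σ cⁿ tⁿ/n!` in `ℂ[[t]]`. -/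
noncomputable def expPS (c : ℂ) : PowerSeries ℂ :=
  PowerSeries.mk fun n => c ^ n / n.factorial

/-- `Σ_{a=0}^{d-1} (-1)^a χ(a) e^{at}` as a formal power series. -/
noncomputable def altSum (χ : ℤ → ℂ) (d : ℕ) : PowerSeries ℂ :=
  ∑ a ∈ Finset.range d, ((-1 : ℂ) ^ a * χ (a : ℤ)) • expPS (a : ℂ)

/-- `E` is the family of generalized Euler polynomials attached to `χ` mod `d`:
`(Σ_{n≥0} E_{n,χ}(x) tⁿ/n!) · (e^{dt}+1) = 2 e^{xt} · Σ_{a=0}^{d-1} (-1)^a χ(a) e^{at}`. -/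
def IsGenEuler (d : ℕ) (χ : ℤ → ℂ) (E : ℕ → ℂ → ℂ) : Prop :=
  ∀ x : ℂ, (PowerSeries.mk fun n => E n x / n.factorial) * (expPS (d : ℂ) + 1)
    = (2 : PowerSeries ℂ) * expPS x * altSum χ d

/-- The alternating generalized power sum `T_k(n,χ) = Σ_{a=0}^{n} (-1)^a χ(a) a^k`
(with the convention `0^0 = 1`). -/
noncomputable def altPowSum (χ : ℤ → ℂ) (k n : ℕ) : ℂ :=
  ∑ a ∈ Finset.range (n + 1), (-1 : ℂ) ^ a * χ (a : ℤ) * (a : ℂ) ^ k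

/-- The multinomial coefficient `(k+l+m)! / (k! l! m!)`. -/
def multinom (k l m : ℕ) : ℕ :=
  (k + l + m).factorial / (k.factorial * l.factorial * m.factorial)

/-! The generating function of `E_{·,χ}(x + y)` is `e^{yt}` times that of `E_{·,χ}(x)`, which gives
the addition formula `E_j(x + y) = Σ_l (j choose l) E_l(x) y^{j-l}`. Applied with `y = (w2/w3) a`,
summed against `(-1)^a χ(a)` over `a < w3 d` and multiplied by `w3^j`, it turns the sum over `a`
into the binomial convolution of `w3^l E_l(w2 y2)` with `w2^{j-l} T_{j-l}(w3 d - 1, χ)`. Writing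
`w1^{l+m} w2^{k+m} w3^{k+l} = (w2 w3)^k (w1 w3)^l (w1 w2)^m`, the multinomial sum on the left is the
same convolution nested inside the binomial sum over `k`. -/

noncomputable def egf (f : ℕ → ℂ) : PowerSeries ℂ :=
  PowerSeries.mk fun n => f n / n.factorial

lemma coeff_egf (f : ℕ → ℂ) (n : ℕ) : PowerSeries.coeff n (egf f) = f n / n.factorial :=
  PowerSeries.coeff_mk _ _

lemma egf_injective : Function.Injective egf := by
  intro f g h
  funext n
  have hn := congrArg (PowerSeries.coeff n) h
  rwa [coeff_egf, coeff_egf, div_left_inj' (Nat.cast_ne_zero.mpr n.factorial_ne_zero)] at hn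

lemma egf_mul_egf (f g : ℕ → ℂ) :
    egf f * egf g = egf fun n => ∑ k ∈ range (n + 1), (n.choose k : ℂ) * f k * g (n - k) := by
  ext n
  rw [PowerSeries.coeff_mul, Nat.sum_antidiagonal_eq_sum_range_succ_mk, coeff_egf, sum_div]
  refine sum_congr rfl fun k hk => ?_
  rw [coeff_egf, coeff_egf, Nat.cast_choose ℂ (Nat.lt_succ_iff.mp (mem_range.mp hk))]
  have := n.factorial_ne_zero
  have := k.factorial_ne_zero
  have := (n - k).factorial_ne_zero
  field_simp

lemma expPS_eq_egf (c : ℂ) : expPS c = egf fun n => c ^ n := rfl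

lemma expPS_mul_expPS (a b : ℂ) : expPS a * expPS b = expPS (a + b) := by
  simp only [expPS_eq_egf, egf_mul_egf, add_pow]
  congr! 3 with n k
  ring

lemma altPowSum_sub_one (χ : ℤ → ℂ) (k : ℕ) {N : ℕ} (hN : 0 < N) :
    altPowSum χ k (N - 1) = ∑ a ∈ range N, (-1 : ℂ) ^ a * χ (a : ℤ) * (a : ℂ) ^ k := by
  rw [altPowSum, Nat.sub_add_cancel hN]

namespace IsGenEuler

variable {d : ℕ} {χ : ℤ → ℂ} {E : ℕ → ℂ → ℂ}

lemma egf_add (hE : IsGenEuler d χ E) (x y : ℂ) :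
    egf (fun n => E n (x + y)) = expPS y * egf fun n => E n x := by
  have hne : expPS (d : ℂ) + 1 ≠ 0 := fun h => by
    simpa [expPS] using congrArg (PowerSeries.coeff 0) h
  apply mul_right_cancel₀ hne
  rw [mul_assoc, egf, egf, hE x, hE (x + y), ← expPS_mul_expPS]
  ring

lemma add (hE : IsGenEuler d χ E) (x y : ℂ) (n : ℕ) :
    E n (x + y) = ∑ l ∈ range (n + 1), (n.choose l : ℂ) * E l x * y ^ (n - l) := by
  have h := hE.egf_add x y
  rw [expPS_eq_egf, mul_comm, egf_mul_egf] at h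
  exact congrFun (egf_injective h) n

lemma pow_mul_sum_add_div_mul (hE : IsGenEuler d χ E) (c : ℕ → ℂ) (N : ℕ) {v : ℂ}
    (hv : v ≠ 0) (u x : ℂ) (n : ℕ) :
    v ^ n * ∑ a ∈ range N, c a * E n (x + u / v * a)
      = ∑ l ∈ range (n + 1), (n.choose l : ℂ) * E l x * v ^ l * u ^ (n - l) *
          ∑ a ∈ range N, c a * (a : ℂ) ^ (n - l) := by
  simp only [hE.add, mul_sum]
  rw [sum_comm]
  refine sum_congr rfl fun l hl => sum_congr rfl fun a _ => ?_
  rw [← Nat.add_sub_of_le (Nat.lt_succ_iff.mp (mem_range.mp hl)), Nat.add_sub_cancel_left, pow_add,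
    div_mul_eq_mul_div, div_pow]
  field_simp
  ring

lemma sum_choose_mul_altPowSum (hE : IsGenEuler d χ E) {N : ℕ} (hN : 0 < N) {w : ℂ}
    (hw : w ≠ 0) (u v x : ℂ) (j : ℕ) :
    ∑ l ∈ range (j + 1), (j.choose l : ℂ) * ((u * w) ^ l * E l x) *
        ((u * v) ^ (j - l) * altPowSum χ (j - l) (N - 1))
      = u ^ j * (w ^ j * ∑ a ∈ range N, (-1 : ℂ) ^ a * χ (a : ℤ) * E j (x + v / w * a)) := by
  rw [hE.pow_mul_sum_add_div_mul (fun a => (-1 : ℂ) ^ a * χ (a : ℤ)) N hw, mul_sum]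
  refine sum_congr rfl fun l hl => ?_
  rw [altPowSum_sub_one χ _ hN, ← Nat.add_sub_of_le (Nat.lt_succ_iff.mp (mem_range.mp hl)),
    Nat.add_sub_cancel_left]
  simp only [pow_add, mul_pow]
  ring

end IsGenEuler

lemma multinom_eq (k l m : ℕ) :
    multinom k l m = (k + l + m).choose k * (l + m).choose l := by
  have h : (k + l + m).factorial
      = (k + l + m).choose k * (l + m).choose l * (k.factorial * l.factorial * m.factorial) := by
    have hk := Nat.add_choose_mul_factorial_mul_factorial (l + m) k
    have hl := Nat.add_choose_mul_factorial_mul_factorial m l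
    rw [add_comm m l] at hl
    rw [add_comm (l + m) k, ← add_assoc] at hk
    rw [← hk, ← hl]
    ring
  rw [multinom, h, Nat.mul_div_cancel _ (by positivity)]

lemma sum_multinom (f g h : ℕ → ℂ) (n : ℕ) :
    ∑ k ∈ range (n + 1), ∑ l ∈ range (n + 1 - k),
        (multinom k l (n - k - l) : ℂ) * f k * g l * h (n - k - l)
      = ∑ k ∈ range (n + 1), (n.choose k : ℂ) * f k *
          ∑ l ∈ range (n - k + 1), ((n - k).choose l : ℂ) * g l * h (n - k - l) := by
  refine sum_congr rfl fun k hk => ?_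
  have hkn := Nat.lt_succ_iff.mp (mem_range.mp hk)
  rw [show n + 1 - k = n - k + 1 by omega, mul_sum]
  refine sum_congr rfl fun l hl => ?_
  have hlk := Nat.lt_succ_iff.mp (mem_range.mp hl)
  rw [multinom_eq, show k + l + (n - k - l) = n by omega, show l + (n - k - l) = n - k by omega]
  push_cast
  ring

theorem stmt_10_general (d : ℕ) (hd0 : 0 < d) (χ : ℤ → ℂ)
    (E : ℕ → ℂ → ℂ) (hE : IsGenEuler d χ E)
    (w1 w2 w3 : ℕ) (hw3 : 0 < w3)
    (y1 y2 : ℂ) (n : ℕ) :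
    (∑ k ∈ range (n + 1), ∑ l ∈ range (n + 1 - k),
      (multinom k l (n - k - l) : ℂ) * E k ((w1 : ℂ) * y1) * E l ((w2 : ℂ) * y2) *
        altPowSum χ (n - k - l) (w3 * d - 1) *
        (w1 : ℂ) ^ (l + (n - k - l)) * (w2 : ℂ) ^ (k + (n - k - l)) * (w3 : ℂ) ^ (k + l))
    = (w3 : ℂ) ^ n * ∑ k ∈ range (n + 1),
        (n.choose k : ℂ) * E k ((w1 : ℂ) * y1) *
          (∑ a ∈ range (w3 * d), (-1 : ℂ) ^ a * χ (a : ℤ) *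
            E (n - k) ((w2 : ℂ) * y2 + (w2 : ℂ) / (w3 : ℂ) * (a : ℂ))) *
          (w1 : ℂ) ^ (n - k) * (w2 : ℂ) ^ k := by
  have hsplit := sum_multinom (fun k => ((w2 : ℂ) * w3) ^ k * E k (w1 * y1))
    (fun l => ((w1 : ℂ) * w3) ^ l * E l (w2 * y2))
    (fun m => ((w1 : ℂ) * w2) ^ m * altPowSum χ m (w3 * d - 1)) n
  refine (sum_congr rfl fun k _ => sum_congr rfl fun l _ => ?_).trans (hsplit.trans ?_)
  · simp only [pow_add, mul_pow]
    ring
  rw [mul_sum]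
  refine sum_congr rfl fun k hk => ?_
  obtain ⟨j, rfl⟩ := Nat.exists_eq_add_of_le (Nat.lt_succ_iff.mp (mem_range.mp hk))
  rw [Nat.add_sub_cancel_left, hE.sum_choose_mul_altPowSum (Nat.mul_pos hw3 hd0)
    (Nat.cast_ne_zero.mpr hw3.ne'), pow_add]
  ring

/-- Identity between the two expressions (a-1(1)) and (a-1(2)) for `I(Λ²₃¹)`. -/
theorem stmt_10 (d : ℕ) (hd : Odd d) (hd0 : 0 < d) (χ : ℤ → ℂ)
    (hper : ∀ a : ℤ, χ (a + d) = χ a)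
    (hmul : ∀ a b : ℤ, χ (a * b) = χ a * χ b) (hone : χ 1 = 1)
    (hvan : ∀ a : ℤ, 1 < Int.gcd a d → χ a = 0)
    (E : ℕ → ℂ → ℂ) (hE : IsGenEuler d χ E)
    (w1 w2 w3 : ℕ) (hw1 : 0 < w1) (hw2 : 0 < w2) (hw3 : 0 < w3)
    (hw1o : Odd w1) (hw2o : Odd w2) (hw3o : Odd w3)
    (y1 y2 : ℂ) (n : ℕ) :
    (∑ k ∈ range (n + 1), ∑ l ∈ range (n + 1 - k),
      (multinom k l (n - k - l) : ℂ) * E k ((w1 : ℂ) * y1) * E l ((w2 : ℂ) * y2) *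
        altPowSum χ (n - k - l) (w3 * d - 1) *
        (w1 : ℂ) ^ (l + (n - k - l)) * (w2 : ℂ) ^ (k + (n - k - l)) * (w3 : ℂ) ^ (k + l))
    = (w3 : ℂ) ^ n * ∑ k ∈ range (n + 1),
        (n.choose k : ℂ) * E k ((w1 : ℂ) * y1) *
          (∑ a ∈ range (w3 * d), (-1 : ℂ) ^ a * χ (a : ℤ) *
            E (n - k) ((w2 : ℂ) * y2 + (w2 : ℂ) / (w3 : ℂ) * (a : ℂ))) *
          (w1 : ℂ) ^ (n - k) * (w2 : ℂ) ^ k :=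
  stmt_10_general d hd0 χ E hE w1 w2 w3 hw3 y1 y2 n
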